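/- arXiv:1612.09068 — 2 statements merged into one kernel-verified Lean document; each statement's English description precedes it below -/
import Mathlib

section
/- Let N be a 3-prime zero-symmetric left near-ring and d a nonzero multiplicative derivation of N. If a ∈ N satisfies d(x)·a = 0 for all x ∈ N, then a = 0. -/
class LeftNearRing (N : Type*) extends AddGroup N, Mul N where
  mul_assoc : ∀ a b c : N, a * b * c = a * (b * c)
  left_distrib : ∀ a b c : N, a * (b + c) = a * b + a * c

/-!
Although a left near-ring is only left distributive, a multiplicative derivation `d` satisfies
the right distributive law `d (p * q) * r = p * (d q * r) + d p * q * r`: expand `d (p * q * r)`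
once as `d ((p * q) * r)` and once as `d (p * (q * r))`. Applied to `d (x * n) * a` with
`d _ * a = 0`, it gives `d x * n * a = 0` for every `n`, so 3-primeness and `d x ≠ 0` force `a = 0`.
-/

namespace LeftNearRing

variable {N : Type*} [LeftNearRing N]

theorem mul_zero (u : N) : u * 0 = 0 :=
  add_eq_left.mp (by rw [← left_distrib, add_zero] : u * 0 + u * 0 = u * 0)

variable {d : N → N}

theorem derivation_mul_mul (hd : ∀ x y : N, d (x * y) = x * d y + d x * y) (p q r : N) :
    d (p * q) * r = p * (d q * r) + d p * q * r := by
  have hleft := hd (p * q) r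
  have hright := hd p (q * r)
  rw [hd q r, left_distrib, ← mul_assoc p q (d r), ← mul_assoc p q r, add_assoc, hleft]
    at hright
  rw [add_left_cancel hright, mul_assoc]

theorem derivation_mul_mul_eq_zero (hd : ∀ x y : N, d (x * y) = x * d y + d x * y)
    {a : N} (ha : ∀ x : N, d x * a = 0) (x n : N) : d x * n * a = 0 := by
  have h := ha (x * n)
  rwa [derivation_mul_mul hd, ha n, mul_zero, zero_add] at h

end LeftNearRing

theorem stmt3_general {N : Type*} [LeftNearRing N]
    (hp : ∀ a b : N, (∀ n : N, a * n * b = 0) → a = 0 ∨ b = 0)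
    (d : N → N) (hd : ∀ x y : N, d (x * y) = x * d y + d x * y)
    (hd0 : ∃ x : N, d x ≠ 0)
    (a : N) (ha : ∀ x : N, d x * a = 0) : a = 0 := by
  obtain ⟨x, hx⟩ := hd0
  exact (hp (d x) a (LeftNearRing.derivation_mul_mul_eq_zero hd ha x)).resolve_left hx

theorem stmt3 {N : Type*} [LeftNearRing N]
    (hzs : ∀ x : N, 0 * x = 0)
    (hp : ∀ a b : N, (∀ n : N, a * n * b = 0) → a = 0 ∨ b = 0)
    (d : N → N) (hd : ∀ x y : N, d (x * y) = x * d y + d x * y)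
    (hd0 : ∃ x : N, d x ≠ 0)
    (a : N) (ha : ∀ x : N, d x * a = 0) : a = 0 :=
  stmt3_general hp d hd hd0 a ha
end

section
/- Let N be a 3-prime zero-symmetric left near-ring with N ≠ {0}, and d a multiplicative derivation of N such that d(xy) = d(y)·d(x) for all x, y ∈ N. Then d = 0. -/
/-!
Expanding `d (a * (a * b))` once with the Leibniz rule and once with the reversal rule gives
`d a * (a * b) = d a * (b * d a)`, hence `d a * N * (d a * c - c * d a) = 0`, so in a 3-prime
near-ring every nonzero value `d x` is central. A central `c = d x` then satisfies
`c * (c * y) = 0` for all `y`, i.e. `c * N * c = 0`, and 3-primeness forces `c = 0`.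
-/

namespace LeftNearRing

variable {N : Type*} [LeftNearRing N]

def IsThreePrime (N : Type*) [LeftNearRing N] : Prop :=
  ∀ a b : N, (∀ n : N, a * n * b = 0) → a = 0 ∨ b = 0

def IsMulDerivation (d : N → N) : Prop :=
  ∀ x y : N, d (x * y) = x * d y + d x * y

def IsAntiMultiplicative (d : N → N) : Prop :=
  ∀ x y : N, d (x * y) = d y * d x

def mulLeft (a : N) : N →+ N :=
  AddMonoidHom.mk' (a * ·) (LeftNearRing.left_distrib a)

protected theorem mul_sub (a b c : N) : a * (b - c) = a * b - a * c :=
  (mulLeft a).map_sub b c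

section Derivation

variable {d : N → N}

theorem mul_deriv_add_deriv_mul (hd : IsMulDerivation d) (hh : IsAntiMultiplicative d)
    (a b : N) : a * d b + d a * b = d b * d a := by
  rw [← hd, hh]

theorem deriv_mul_deriv_mul (hd : IsMulDerivation d) (hh : IsAntiMultiplicative d)
    (a b c : N) : d b * (d a * c) = a * (d b * c) + d a * (b * c) := by
  have hab : a * (b * d c) + d b * (d a * c) = d c * (d b * d a) := by
    simpa only [hh a b, mul_assoc] using mul_deriv_add_deriv_mul hd hh (a * b) c
  have hbc : a * (b * d c) + a * (d b * c) = a * (d c * d b) := by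
    rw [← left_distrib, mul_deriv_add_deriv_mul hd hh]
  have habc : a * (d c * d b) + d a * (b * c) = d c * (d b * d a) := by
    simpa only [hh b c, mul_assoc] using mul_deriv_add_deriv_mul hd hh a (b * c)
  rw [← neg_add_cancel_left (a * (b * d c)) (d b * (d a * c)), hab, ← habc, ← hbc, add_assoc,
    neg_add_cancel_left]

theorem deriv_mul_mul_eq_deriv_mul_mul_deriv (hd : IsMulDerivation d)
    (hh : IsAntiMultiplicative d) (a b : N) : d a * (a * b) = d a * (b * d a) := by
  have hleibniz : d (a * (a * b)) = a * (a * d b) + a * (d a * b) + d a * (a * b) := by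
    rw [hd a (a * b), hd a b, left_distrib, add_assoc]
  have hreversed : d (a * (a * b)) = a * (a * d b) + a * (d a * b) + d a * (b * d a) := by
    rw [hh a (a * b), hh a b, mul_assoc, deriv_mul_deriv_mul hd hh a b (d a),
      ← mul_deriv_add_deriv_mul hd hh a b, left_distrib, add_assoc]
  exact add_left_cancel (hleibniz.symm.trans hreversed)

theorem deriv_mul_mul_commutator_eq_zero (hd : IsMulDerivation d)
    (hh : IsAntiMultiplicative d) (a b c : N) : d a * (b * (d a * c - c * d a)) = 0 := by
  have hright : d a * (a * (b * c)) = d a * (b * (c * d a)) := by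
    rw [deriv_mul_mul_eq_deriv_mul_mul_deriv hd hh a (b * c), mul_assoc b c (d a)]
  have hleft : d a * (a * (b * c)) = d a * (b * (d a * c)) := by
    simpa only [mul_assoc] using congrArg (· * c) (deriv_mul_mul_eq_deriv_mul_mul_deriv hd hh a b)
  rw [LeftNearRing.mul_sub, LeftNearRing.mul_sub, ← hleft, ← hright, sub_self]

theorem deriv_mul_comm_of_ne_zero (hp : IsThreePrime N) (hd : IsMulDerivation d)
    (hh : IsAntiMultiplicative d) {x : N} (hx : d x ≠ 0) (z : N) : d x * z = z * d x := by
  have hprime := hp (d x) (d x * z - z * d x) fun n ↦ by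
    rw [mul_assoc]
    exact deriv_mul_mul_commutator_eq_zero hd hh x n z
  exact sub_eq_zero.mp (hprime.resolve_left hx)

theorem deriv_mul_deriv_mul_eq_zero_of_comm (hd : IsMulDerivation d)
    (hh : IsAntiMultiplicative d) {x : N} (hcomm : ∀ z, d x * z = z * d x) (y : N) :
    d x * (d x * y) = 0 := by
  have hx : ∀ b, d x * (x * b) = d x * (d x * b) := fun b ↦ by
    rw [deriv_mul_mul_eq_deriv_mul_mul_deriv hd hh x b, ← hcomm b]
  have hleft : x * (d y * d x) = d x * (d x * d y) := by
    rw [← hcomm (d y), ← mul_assoc, ← hcomm x, mul_assoc, hx (d y)]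
  have hright : d y * d x * d x = d x * (d x * d y) := by
    rw [← hcomm (d y), mul_assoc, ← hcomm (d y)]
  have h := mul_deriv_add_deriv_mul hd hh x (x * y)
  rw [hh x y, hleft, hright, hx y] at h
  exact add_eq_left.mp h

end Derivation

theorem eq_zero_of_comm_of_mul_mul_self_eq_zero (hp : IsThreePrime N) {c : N}
    (hcomm : ∀ z, c * z = z * c) (hc : ∀ y, c * (c * y) = 0) : c = 0 :=
  (hp c c fun n ↦ by rw [mul_assoc, ← hcomm n, hc]).elim id id

end LeftNearRing

theorem stmt7_general {N : Type*} [LeftNearRing N]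
    (hp : ∀ a b : N, (∀ n : N, a * n * b = 0) → a = 0 ∨ b = 0)
    (d : N → N) (hd : ∀ x y : N, d (x * y) = x * d y + d x * y)
    (hh : ∀ x y : N, d (x * y) = d y * d x) :
    ∀ x : N, d x = 0 := by
  intro x
  by_contra hx
  have hcomm := LeftNearRing.deriv_mul_comm_of_ne_zero hp hd hh hx
  exact hx (LeftNearRing.eq_zero_of_comm_of_mul_mul_self_eq_zero hp hcomm
    (LeftNearRing.deriv_mul_deriv_mul_eq_zero_of_comm hd hh hcomm))

theorem stmt7 {N : Type*} [LeftNearRing N] (hN : ∃ x : N, x ≠ 0)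
    (hzs : ∀ x : N, 0 * x = 0)
    (hp : ∀ a b : N, (∀ n : N, a * n * b = 0) → a = 0 ∨ b = 0)
    (d : N → N) (hd : ∀ x y : N, d (x * y) = x * d y + d x * y)
    (hh : ∀ x y : N, d (x * y) = d y * d x) :
    ∀ x : N, d x = 0 :=
  stmt7_general hp d hd hh
end
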